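/- arXiv:2502.16108 — 9 statements merged into one kernel-verified Lean document; each statement's English description precedes it below -/
import Mathlib

section
/- Under the Newton iteration x_{i+1} = x_i − f(x_i)/f'(x_i), x_0 = 1, for f(x) = x² + bx + c with integer b ≥ 2, c < 0, 1 + b + c > 0, the error ε_i = x_i − α satisfies ε_{i+1} < ε_i²/b for all i ≥ 0. -/
/-!
For a monic quadratic `p(x) = x² + bx + c` with root `α`, Newton's method has the exact error law
`N(x) - α = (x - α)² / p'(x)` with `p'(x) = 2x + b`. Hence an iterate starting above `α` stays above
`α`, and once `x > 0` the denominator `2x + b` exceeds `b`.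
-/

section QuadraticNewton

variable {K : Type*} [Field K] {b c α x : K}

def quadNewtonStep (b c x : K) : K := x - (x ^ 2 + b * x + c) / (2 * x + b)

theorem quadNewtonStep_sub_root (hroot : α ^ 2 + b * α + c = 0) (hx : 2 * x + b ≠ 0) :
    quadNewtonStep b c x - α = (x - α) ^ 2 / (2 * x + b) := by
  rw [quadNewtonStep, eq_div_iff hx, sub_mul, sub_mul, div_mul_cancel₀ _ hx]
  linear_combination (-1 : K) * hroot

variable [LinearOrder K] [IsStrictOrderedRing K]

theorem root_lt_quadNewtonStep (hroot : α ^ 2 + b * α + c = 0) (hαb : 0 < 2 * α + b)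
    (hx : α < x) : α < quadNewtonStep b c x := by
  have hden : 0 < 2 * x + b := by linarith
  rw [← sub_pos, quadNewtonStep_sub_root hroot hden.ne']
  exact div_pos (pow_pos (sub_pos.mpr hx) 2) hden

theorem quadNewtonStep_sub_root_lt (hroot : α ^ 2 + b * α + c = 0) (hb : 0 < b) (hx0 : 0 < x)
    (hx : α < x) : quadNewtonStep b c x - α < (x - α) ^ 2 / b := by
  have hden : b < 2 * x + b := by linarith
  rw [quadNewtonStep_sub_root hroot (hb.trans hden).ne']
  exact div_lt_div_of_pos_left (pow_pos (sub_pos.mpr hx) 2) hb hden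

end QuadraticNewton

theorem newton_error_lt_general (b c : ℤ) (hb : 2 ≤ b)
    (α : ℝ) (hα : α ∈ Set.Ioo (0 : ℝ) 1)
    (hroot : α ^ 2 + (b : ℝ) * α + (c : ℝ) = 0)
    (x : ℕ → ℝ) (hx0 : x 0 = 1)
    (hxrec : ∀ i, x (i + 1) =
      x i - (x i ^ 2 + (b : ℝ) * x i + (c : ℝ)) / (2 * x i + (b : ℝ))) :
    ∀ i, x (i + 1) - α < (x i - α) ^ 2 / (b : ℝ) := by
  obtain ⟨hα0, hα1⟩ := hα
  have hb0 : (0 : ℝ) < b := by exact_mod_cast (by omega : (0 : ℤ) < b)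
  have above_root : ∀ i, α < x i := by
    intro i
    induction i with
    | zero => exact hx0 ▸ hα1
    | succ n ih => exact hxrec n ▸ root_lt_quadNewtonStep hroot (by linarith) ih
  intro i
  exact hxrec i ▸ quadNewtonStep_sub_root_lt hroot hb0 (hα0.trans (above_root i)) (above_root i)

theorem newton_error_lt (b c : ℤ) (hb : 2 ≤ b) (hc : c < 0)
    (h : 0 < 1 + b + c) (α : ℝ) (hα : α ∈ Set.Ioo (0 : ℝ) 1)
    (hroot : α ^ 2 + (b : ℝ) * α + (c : ℝ) = 0)
    (x : ℕ → ℝ) (hx0 : x 0 = 1)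
    (hxrec : ∀ i, x (i + 1) =
      x i - (x i ^ 2 + (b : ℝ) * x i + (c : ℝ)) / (2 * x i + (b : ℝ))) :
    ∀ i, x (i + 1) - α < (x i - α) ^ 2 / (b : ℝ) :=
  newton_error_lt_general b c hb α hα hroot x hx0 hxrec
end

section
/- For the Newton iteration x_{i+1} = x_i − f(x_i)/f'(x_i) with x_0 = 1 applied to f(x) = x² + bx + c with integer b ≥ 2, c < 0, 1 + b + c > 0, and α the root of f in (0,1), the error satisfies x_i − α < b^(−2^i + 1) for all i ≥ 0. -/
/-! The Newton error of the monic quadratic `X ^ 2 + b X + c` at its root `α` satisfies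
`x' - α = (x - α) ^ 2 / (2 x + b)`. Starting from `x₀ = 1 > α > 0`, every iterate stays at or
above `α`, so the denominator is at least `b` and the error `eᵢ` obeys `eᵢ₊₁ ≤ eᵢ ^ 2 / b`.
The exponent `kᵢ = 1 - 2 ^ i` satisfies `kᵢ₊₁ = 2 kᵢ - 1`, which is exactly what squaring and
dividing by `b` does to a bound `b ^ kᵢ`. -/

lemma quadratic_newton_sub_root {K : Type*} [Field K] {b c α x : K}
    (hroot : α ^ 2 + b * α + c = 0) (hx : 2 * x + b ≠ 0) :
    x - (x ^ 2 + b * x + c) / (2 * x + b) - α = (x - α) ^ 2 / (2 * x + b) := by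
  rw [eq_div_iff hx, sub_mul, sub_mul, div_mul_cancel₀ _ hx]
  linear_combination -hroot

lemma sq_div_lt_zpow_two_mul_sub_one {b e : ℝ} {k : ℤ} (hb : 0 < b) (he : 0 ≤ e)
    (hek : e < b ^ k) : e ^ 2 / b < b ^ (2 * k - 1) := by
  have hpow : b ^ (2 * k - 1) * b = (b ^ k) ^ 2 := by
    rw [← zpow_add_one₀ hb.ne', sub_add_cancel, mul_comm, zpow_mul, zpow_ofNat]
  rw [div_lt_iff₀ hb, hpow]
  exact pow_lt_pow_left₀ hek he two_ne_zero

lemma quadratic_newton_error_step {b c α x : ℝ} {k : ℤ} (hb : 0 < b) (hα : 0 < α)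
    (hroot : α ^ 2 + b * α + c = 0) (hαx : α ≤ x) (hxk : x - α < b ^ k) :
    α ≤ x - (x ^ 2 + b * x + c) / (2 * x + b) ∧
      x - (x ^ 2 + b * x + c) / (2 * x + b) - α < b ^ (2 * k - 1) := by
  have hden : b ≤ 2 * x + b := by linarith
  have herr := quadratic_newton_sub_root hroot (by linarith : 2 * x + b ≠ 0)
  refine ⟨?_, ?_⟩
  · have : 0 ≤ (x - α) ^ 2 / (2 * x + b) := div_nonneg (sq_nonneg _) (by linarith)
    linarith
  · calc x - (x ^ 2 + b * x + c) / (2 * x + b) - α = (x - α) ^ 2 / (2 * x + b) := herr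
      _ ≤ (x - α) ^ 2 / b := div_le_div_of_nonneg_left (sq_nonneg _) hb hden
      _ < b ^ (2 * k - 1) := sq_div_lt_zpow_two_mul_sub_one hb (by linarith) hxk

theorem newton_error_bound_general (b c : ℤ) (hb : 2 ≤ b) (α : ℝ) (hα : α ∈ Set.Ioo (0 : ℝ) 1)
    (hroot : α ^ 2 + (b : ℝ) * α + (c : ℝ) = 0)
    (x : ℕ → ℝ) (hx0 : x 0 = 1)
    (hxrec : ∀ i, x (i + 1) =
      x i - (x i ^ 2 + (b : ℝ) * x i + (c : ℝ)) / (2 * x i + (b : ℝ))) :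
    ∀ i : ℕ, x i - α < (b : ℝ) ^ (-(2 : ℤ) ^ i + 1) := by
  have hb0 : (0 : ℝ) < b := by exact_mod_cast (by omega : (0 : ℤ) < b)
  suffices key : ∀ i, α ≤ x i ∧ x i - α < (b : ℝ) ^ (-(2 : ℤ) ^ i + 1) from fun i ↦ (key i).2
  intro i
  induction i with
  | zero =>
    simp only [hx0, pow_zero, neg_add_cancel, zpow_zero]
    constructor <;> linarith [hα.1, hα.2]
  | succ i ih =>
    have hexp : -(2 : ℤ) ^ (i + 1) + 1 = 2 * (-(2 : ℤ) ^ i + 1) - 1 := by ring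
    rw [hxrec, hexp]
    exact quadratic_newton_error_step hb0 hα.1 hroot ih.1 ih.2

theorem newton_error_bound (b c : ℤ) (hb : 2 ≤ b) (hc : c < 0)
    (h : 0 < 1 + b + c) (α : ℝ) (hα : α ∈ Set.Ioo (0 : ℝ) 1)
    (hroot : α ^ 2 + (b : ℝ) * α + (c : ℝ) = 0)
    (x : ℕ → ℝ) (hx0 : x 0 = 1)
    (hxrec : ∀ i, x (i + 1) =
      x i - (x i ^ 2 + (b : ℝ) * x i + (c : ℝ)) / (2 * x i + (b : ℝ))) :
    ∀ i : ℕ, x i - α < (b : ℝ) ^ (-(2 : ℤ) ^ i + 1) :=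
  newton_error_bound_general b c hb α hα hroot x hx0 hxrec
end

section
/- Let α ∈ (0,1) be irrational with binary digits (b_k), x ∈ (α,1) rational with binary digits (b̃_k) (expansion not ending in all 1s), integers N, n with 1 ≤ N < n and x − α < 2^(−n), and let (c̃_k) be the binary expansion (not ending in all 1s) of x − Σ_{k=1}^n b_k 2^(−k). Then the following are equivalent: (i) (b_1,…,b_N) ≠ (b̃_1,…,b̃_N); (ii) b_{N+1} = b_{N+2} = … = b_n = 1 and c̃_n = 1; (iii) b̃_{N+1} = b̃_{N+2} = … = b̃_n = 0 and c̃_n = 1. -/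
/-!
Write `binPrefix d m` for the integer with binary digits `d 1, …, d m`. When the expansion `d`
does not end in ones, or its value is irrational, `binPrefix d m = ⌊2 ^ m · value⌋`. The
remainder `x - ∑_{k ≤ n} b_k 2^{-k}` lies in `[0, 2 · 2^{-n})`, so `⌊2^n x⌋ = ⌊2^n α⌋ + c̃_n`
with `c̃_n ∈ {0, 1}`. The first `N` digits of `α` and of `x` are these two integers divided by
`2^(n-N)`, so they differ exactly when adding `c̃_n` carries out of the last `n - N` digits:
when `c̃_n = 1` and these digits of `α` are all ones, equivalently those of `x` are all zeros.
-/

open Finset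

lemma Nat.div_ne_add_div_iff {a c M : ℕ} (hM : 0 < M) (hc : c ≤ 1) :
    (a / M ≠ (a + c) / M ↔ a % M = M - 1 ∧ c = 1) ∧
      (a / M ≠ (a + c) / M ↔ (a + c) % M = 0 ∧ c = 1) := by
  have hr := Nat.mod_lt a hM
  have ha := Nat.div_add_mod a M
  interval_cases c
  · simp
  by_cases hlast : a % M = M - 1
  · have h : (a + 1) / M = a / M + 1 ∧ (a + 1) % M = 0 :=
      (Nat.div_mod_unique hM).2 ⟨by rw [mul_add]; omega, hM⟩
    simp [hlast, h]
  · have h : (a + 1) / M = a / M ∧ (a + 1) % M = a % M + 1 :=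
      (Nat.div_mod_unique hM).2 ⟨by omega, by omega⟩
    simp [hlast, h]

lemma floor_eq_add_floor_sub_floor {u v : ℝ} (hvu : v - u < 1) (hv : (⌊u⌋₊ : ℝ) ≤ v) :
    ⌊v⌋₊ = ⌊u⌋₊ + ⌊v - ⌊u⌋₊⌋₊ ∧ ⌊v - ⌊u⌋₊⌋₊ ≤ 1 := by
  have hv' : 0 ≤ v - ⌊u⌋₊ := sub_nonneg.2 hv
  refine ⟨by rw [add_comm, ← Nat.floor_add_natCast hv', sub_add_cancel], ?_⟩
  have := Nat.lt_floor_add_one u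
  have : ⌊v - ⌊u⌋₊⌋₊ < 2 := (Nat.floor_lt hv').2 (by push_cast; linarith)
  omega

def binPrefix (d : ℕ → ℕ) : ℕ → ℕ
  | 0 => 0
  | m + 1 => 2 * binPrefix d m + d (m + 1)

lemma forall_le_add_one_iff (P : ℕ → Prop) (m : ℕ) :
    (∀ k, 1 ≤ k → k ≤ m + 1 → P k) ↔ (∀ k, 1 ≤ k → k ≤ m → P k) ∧ P (m + 1) := by
  refine ⟨fun h => ⟨fun k hk1 hk2 => h k hk1 (by omega), h (m + 1) (by omega) le_rfl⟩, ?_⟩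
  rintro ⟨h, hlast⟩ k hk1 hk2
  obtain hkm | rfl : k ≤ m ∨ k = m + 1 := by omega
  exacts [h k hk1 hkm, hlast]

lemma forall_le_shift_iff (P : ℕ → Prop) (m j : ℕ) :
    (∀ k, 1 ≤ k → k ≤ j → P (m + k)) ↔ ∀ k, m + 1 ≤ k → k ≤ m + j → P k := by
  refine ⟨fun h k hk1 hk2 => ?_, fun h k hk1 hk2 => h (m + k) (by omega) (by omega)⟩
  simpa [Nat.add_sub_cancel' (by omega : m ≤ k)] using h (k - m) (by omega) (by omega)

section binPrefix

variable {d e : ℕ → ℕ}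

lemma binPrefix_lt_two_pow (hd : ∀ k, d k ≤ 1) (m : ℕ) : binPrefix d m < 2 ^ m := by
  induction m with
  | zero => simp [binPrefix]
  | succ m ih => have := hd (m + 1); rw [binPrefix, pow_succ]; omega

lemma binPrefix_add (d : ℕ → ℕ) (m j : ℕ) :
    binPrefix d (m + j) = binPrefix d m * 2 ^ j + binPrefix (fun k => d (m + k)) j := by
  induction j with
  | zero => simp [binPrefix]
  | succ j ih => rw [← add_assoc, binPrefix, ih, binPrefix, pow_succ]; ring_nf

lemma binPrefix_div_two_pow (hd : ∀ k, d k ≤ 1) (m j : ℕ) :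
    binPrefix d (m + j) / 2 ^ j = binPrefix d m := by
  rw [binPrefix_add, mul_comm, Nat.mul_add_div (by positivity),
    Nat.div_eq_of_lt (binPrefix_lt_two_pow (fun k => hd _) j), add_zero]

lemma binPrefix_mod_two_pow (hd : ∀ k, d k ≤ 1) (m j : ℕ) :
    binPrefix d (m + j) % 2 ^ j = binPrefix (fun k => d (m + k)) j := by
  rw [binPrefix_add, Nat.mul_add_mod_of_lt (binPrefix_lt_two_pow (fun k => hd _) j)]

lemma binPrefix_eq_binPrefix_iff (hd : ∀ k, d k ≤ 1) (he : ∀ k, e k ≤ 1) (m : ℕ) :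
    binPrefix d m = binPrefix e m ↔ ∀ k, 1 ≤ k → k ≤ m → d k = e k := by
  induction m with
  | zero => simp only [binPrefix, true_iff]; omega
  | succ m ih =>
    have := hd (m + 1); have := he (m + 1)
    rw [forall_le_add_one_iff, ← ih, binPrefix, binPrefix]
    omega

lemma binPrefix_ne_binPrefix_iff (hd : ∀ k, d k ≤ 1) (he : ∀ k, e k ≤ 1) (m : ℕ) :
    binPrefix d m ≠ binPrefix e m ↔ ∃ k, 1 ≤ k ∧ k ≤ m ∧ d k ≠ e k := by
  rw [ne_eq, binPrefix_eq_binPrefix_iff hd he]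
  push Not
  rfl

lemma binPrefix_eq_zero_iff (m : ℕ) :
    binPrefix d m = 0 ↔ ∀ k, 1 ≤ k → k ≤ m → d k = 0 := by
  induction m with
  | zero => simp only [binPrefix, true_iff]; omega
  | succ m ih => rw [forall_le_add_one_iff, ← ih, binPrefix]; omega

lemma binPrefix_eq_two_pow_sub_one_iff (hd : ∀ k, d k ≤ 1) (m : ℕ) :
    binPrefix d m = 2 ^ m - 1 ↔ ∀ k, 1 ≤ k → k ≤ m → d k = 1 := by
  induction m with
  | zero => simp only [binPrefix, pow_zero, Nat.sub_self, true_iff]; omega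
  | succ m ih =>
    have := hd (m + 1); have := binPrefix_lt_two_pow hd m
    rw [forall_le_add_one_iff, ← ih, binPrefix, pow_succ]
    omega

lemma binPrefix_mod_two_pow_eq_zero_iff (hd : ∀ k, d k ≤ 1) (m j : ℕ) :
    binPrefix d (m + j) % 2 ^ j = 0 ↔ ∀ k, m + 1 ≤ k → k ≤ m + j → d k = 0 := by
  rw [binPrefix_mod_two_pow hd, binPrefix_eq_zero_iff, forall_le_shift_iff (fun k => d k = 0)]

lemma binPrefix_mod_two_pow_eq_two_pow_sub_one_iff (hd : ∀ k, d k ≤ 1) (m j : ℕ) :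
    binPrefix d (m + j) % 2 ^ j = 2 ^ j - 1 ↔ ∀ k, m + 1 ≤ k → k ≤ m + j → d k = 1 := by
  rw [binPrefix_mod_two_pow hd, binPrefix_eq_two_pow_sub_one_iff (fun k => hd _),
    forall_le_shift_iff (fun k => d k = 1)]

lemma binPrefix_eq_of_le_one {m : ℕ} (hm : 0 < m) (h : binPrefix d m ≤ 1) :
    binPrefix d m = d m := by
  cases m with
  | zero => omega
  | succ m => rw [binPrefix] at h ⊢; omega

end binPrefix

lemma sum_Icc_mul_two_zpow_neg (d : ℕ → ℕ) (m : ℕ) :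
    ∑ k ∈ Icc 1 m, (d k : ℝ) * 2 ^ (-(k : ℤ)) = binPrefix d m / 2 ^ m := by
  induction m with
  | zero => simp [binPrefix]
  | succ m ih =>
    rw [sum_Icc_succ_top (by omega), ih, binPrefix, zpow_neg, zpow_natCast]
    push_cast
    field_simp
    ring

noncomputable def binValue (d : ℕ → ℕ) : ℝ := ∑' k : ℕ, (d (k + 1) : ℝ) / 2 ^ (k + 1)

lemma binValue_eq_tsum_mul_two_zpow (d : ℕ → ℕ) :
    binValue d = ∑' k : ℕ, (d (k + 1) : ℝ) * (2 : ℝ) ^ (-((k : ℤ) + 1)) := by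
  refine tsum_congr fun k => ?_
  rw [zpow_neg, ← div_eq_mul_inv]
  norm_cast

section binValue

variable {d : ℕ → ℕ}

lemma binValue_term_le (hd : ∀ k, d k ≤ 1) (k : ℕ) :
    (d (k + 1) : ℝ) / 2 ^ (k + 1) ≤ 1 / 2 / 2 ^ k := by
  rw [div_div, ← pow_succ']
  gcongr
  exact_mod_cast hd (k + 1)

lemma summable_binValue (hd : ∀ k, d k ≤ 1) :
    Summable fun k => (d (k + 1) : ℝ) / 2 ^ (k + 1) :=
  .of_nonneg_of_le (fun k => by positivity) (binValue_term_le hd) (summable_geometric_two' 1)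

lemma binValue_nonneg : 0 ≤ binValue d := tsum_nonneg fun k => by positivity

lemma binValue_le_one (hd : ∀ k, d k ≤ 1) : binValue d ≤ 1 :=
  calc binValue d ≤ ∑' k : ℕ, (1 : ℝ) / 2 / 2 ^ k :=
        (summable_binValue hd).tsum_le_tsum (binValue_term_le hd) (summable_geometric_two' 1)
    _ = 1 := tsum_geometric_two' 1

lemma binValue_lt_one (hd : ∀ k, d k ≤ 1) {i : ℕ} (hi : d (i + 1) = 0) : binValue d < 1 :=
  calc binValue d < ∑' k : ℕ, (1 : ℝ) / 2 / 2 ^ k :=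
        Summable.tsum_lt_tsum_of_nonneg (fun k => by positivity) (binValue_term_le hd)
          (by rw [hi, Nat.cast_zero, zero_div]; positivity) (summable_geometric_two' 1)
    _ = 1 := tsum_geometric_two' 1

lemma two_mul_binValue (hd : ∀ k, d k ≤ 1) :
    2 * binValue d = d 1 + binValue (fun k => d (1 + k)) := by
  rw [binValue, (summable_binValue hd).tsum_eq_zero_add, mul_add, ← tsum_mul_left, binValue]
  congr 1
  · ring
  · refine tsum_congr fun k => ?_
    rw [add_comm 1 (k + 1), pow_succ]
    field_simp

lemma two_pow_mul_binValue (hd : ∀ k, d k ≤ 1) (m : ℕ) :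
    2 ^ m * binValue d = binPrefix d m + binValue (fun k => d (m + k)) := by
  induction m with
  | zero => simp [binPrefix]
  | succ m ih =>
    have h := two_mul_binValue (d := fun k => d (m + k)) fun k => hd _
    simp only [← add_assoc] at h
    rw [pow_succ, mul_comm _ (2 : ℝ), mul_assoc, ih, binPrefix]
    push_cast
    linear_combination h

lemma floor_two_pow_mul_binValue (hd : ∀ k, d k ≤ 1) {m : ℕ}
    (htail : binValue (fun k => d (m + k)) < 1) :
    ⌊(2 : ℝ) ^ m * binValue d⌋₊ = binPrefix d m := by
  rw [two_pow_mul_binValue hd, add_comm, Nat.floor_add_natCast binValue_nonneg,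
    Nat.floor_eq_zero.2 htail, zero_add]

lemma binValue_shift_lt_one_of_not_eventually_one (hd : ∀ k, d k ≤ 1)
    (hd1 : ¬ ∃ K, ∀ k ≥ K, d k = 1) (m : ℕ) : binValue (fun k => d (m + k)) < 1 := by
  push Not at hd1
  obtain ⟨k, hk, hk1⟩ := hd1 (m + 1)
  refine binValue_lt_one (fun k => hd _) (i := k - m - 1) ?_
  rw [show m + (k - m - 1 + 1) = k by omega]
  have := hd k
  omega

lemma binValue_shift_lt_one_of_irrational (hd : ∀ k, d k ≤ 1) (hirr : Irrational (binValue d))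
    (m : ℕ) : binValue (fun k => d (m + k)) < 1 := by
  refine (binValue_le_one fun k => hd _).lt_of_ne fun h => hirr ⟨(binPrefix d m + 1) / 2 ^ m, ?_⟩
  have := two_pow_mul_binValue hd m
  rw [h] at this
  push_cast
  rw [← this]
  field_simp

end binValue

theorem binary_expansion_match_conditions_general
    (α : ℝ) (hirr : Irrational α)
    (b : ℕ → ℕ) (hb : ∀ k, b k ≤ 1)
    (hbsum : α = ∑' k : ℕ, (b (k + 1) : ℝ) * (2 : ℝ) ^ (-((k : ℤ) + 1)))
    (x : ℚ)
    (bt : ℕ → ℕ) (hbt : ∀ k, bt k ≤ 1)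
    (hbtsum : (x : ℝ) = ∑' k : ℕ, (bt (k + 1) : ℝ) * (2 : ℝ) ^ (-((k : ℤ) + 1)))
    (hbt1 : ¬ ∃ K, ∀ k ≥ K, bt k = 1)
    (n N : ℕ) (hNn : N < n)
    (hclose : (x : ℝ) - α < (2 : ℝ) ^ (-(n : ℤ)))
    (ct : ℕ → ℕ) (hct : ∀ k, ct k ≤ 1)
    (hctsum : (x : ℝ) - ∑ k ∈ Finset.Icc 1 n, (b k : ℝ) * (2 : ℝ) ^ (-(k : ℤ))
      = ∑' k : ℕ, (ct (k + 1) : ℝ) * (2 : ℝ) ^ (-((k : ℤ) + 1)))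
    (hct1 : ¬ ∃ K, ∀ k ≥ K, ct k = 1) :
    ((∃ k, 1 ≤ k ∧ k ≤ N ∧ b k ≠ bt k) ↔
      ((∀ k, N + 1 ≤ k → k ≤ n → b k = 1) ∧ ct n = 1)) ∧
    ((∃ k, 1 ≤ k ∧ k ≤ N ∧ b k ≠ bt k) ↔
      ((∀ k, N + 1 ≤ k → k ≤ n → bt k = 0) ∧ ct n = 1)) := by
  rw [← binValue_eq_tsum_mul_two_zpow] at hbsum hbtsum hctsum
  rw [sum_Icc_mul_two_zpow_neg] at hctsum
  subst hbsum
  have hb_floor := floor_two_pow_mul_binValue hb (binValue_shift_lt_one_of_irrational hb hirr n)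
  have hbt_floor := hbtsum ▸
    floor_two_pow_mul_binValue hbt (binValue_shift_lt_one_of_not_eventually_one hbt hbt1 n)
  have hct_floor :=
    floor_two_pow_mul_binValue hct (binValue_shift_lt_one_of_not_eventually_one hct hct1 n)
  have hpos : (0 : ℝ) < 2 ^ n := by positivity
  have hrest : (2 : ℝ) ^ n * x - binPrefix b n = 2 ^ n * binValue ct := by
    rw [← hctsum, mul_sub, mul_div_cancel₀ _ hpos.ne']
  have hgap : (2 : ℝ) ^ n * x - 2 ^ n * binValue b < 1 := by
    have := mul_lt_mul_of_pos_left hclose hpos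
    rwa [zpow_neg, zpow_natCast, mul_inv_cancel₀ hpos.ne', mul_sub] at this
  obtain ⟨hcarry, hct_le⟩ := floor_eq_add_floor_sub_floor hgap
    (by rw [hb_floor]; linarith [mul_nonneg hpos.le (binValue_nonneg (d := ct))])
  rw [hb_floor, hrest, hct_floor] at hcarry hct_le
  rw [hbt_floor, binPrefix_eq_of_le_one (by omega) hct_le] at hcarry
  obtain ⟨j, rfl⟩ := Nat.exists_eq_add_of_le hNn.le
  have key := Nat.div_ne_add_div_iff (a := binPrefix b (N + j)) (M := 2 ^ j) (by positivity)
    (hct (N + j))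
  rwa [← hcarry, binPrefix_div_two_pow hb, binPrefix_div_two_pow hbt,
    binPrefix_ne_binPrefix_iff hb hbt, binPrefix_mod_two_pow_eq_two_pow_sub_one_iff hb,
    binPrefix_mod_two_pow_eq_zero_iff hbt] at key

theorem binary_expansion_match_conditions
    (α : ℝ) (hα : α ∈ Set.Ioo (0 : ℝ) 1) (hirr : Irrational α)
    (b : ℕ → ℕ) (hb : ∀ k, b k ≤ 1)
    (hbsum : α = ∑' k : ℕ, (b (k + 1) : ℝ) * (2 : ℝ) ^ (-((k : ℤ) + 1)))
    (x : ℚ) (hxl : α < (x : ℝ)) (hxu : (x : ℝ) < 1)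
    (bt : ℕ → ℕ) (hbt : ∀ k, bt k ≤ 1)
    (hbtsum : (x : ℝ) = ∑' k : ℕ, (bt (k + 1) : ℝ) * (2 : ℝ) ^ (-((k : ℤ) + 1)))
    (hbt1 : ¬ ∃ K, ∀ k ≥ K, bt k = 1)
    (n N : ℕ) (hN1 : 1 ≤ N) (hNn : N < n)
    (hclose : (x : ℝ) - α < (2 : ℝ) ^ (-(n : ℤ)))
    (ct : ℕ → ℕ) (hct : ∀ k, ct k ≤ 1)
    (hctsum : (x : ℝ) - ∑ k ∈ Finset.Icc 1 n, (b k : ℝ) * (2 : ℝ) ^ (-(k : ℤ))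
      = ∑' k : ℕ, (ct (k + 1) : ℝ) * (2 : ℝ) ^ (-((k : ℤ) + 1)))
    (hct1 : ¬ ∃ K, ∀ k ≥ K, ct k = 1) :
    ((∃ k, 1 ≤ k ∧ k ≤ N ∧ b k ≠ bt k) ↔
      ((∀ k, N + 1 ≤ k → k ≤ n → b k = 1) ∧ ct n = 1)) ∧
    ((∃ k, 1 ≤ k ∧ k ≤ N ∧ b k ≠ bt k) ↔
      ((∀ k, N + 1 ≤ k → k ≤ n → bt k = 0) ∧ ct n = 1)) :=
  binary_expansion_match_conditions_general α hirr b hb hbsum x bt hbt hbtsum hbt1 n N hNn hclose ct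
    hct hctsum hct1
end

section
/- Let α ∈ (0,1) be irrational with binary digits (b_k) and x ∈ (α,1) rational with binary digits (b̃_k) taken from the expansion not ending in all 1s. Let n ≥ 2 be an integer with x − α < 2^(−n). If there exists k with 2 ≤ k ≤ n and b̃_k = 1, then b_j = b̃_j for all 1 ≤ j ≤ k − 1. -/
/-!
Let `j` be the first place where the digits of `α` and `x` differ. The difference of the two
values is then `±2⁻¹ ^ j` plus a difference of tails, each tail lying in `[0, 2⁻¹ ^ j]`.
If `b j = 1` and `bt j = 0`, the tail of `x` falls strictly short of `2⁻¹ ^ j` because `bt`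
has a digit `0` after place `j`, so `α > x`. If `bt j = 1` and `b j = 0`, the digit `bt k = 1`
after place `j` gives `x - α ≥ 2⁻¹ ^ k ≥ 2⁻¹ ^ n`. Both contradict the hypotheses.
-/

open Finset

/-- The real number `0.d₁d₂d₃…` in base 2; the digit `d 0` plays no role. -/
noncomputable def binaryValue (d : ℕ → ℕ) : ℝ :=
  ∑' k : ℕ, (d (k + 1) : ℝ) * (2 : ℝ) ^ (-((k : ℤ) + 1))

/- The terms after `j` lose at most `∑_{i > j} 2⁻¹ ^ (i + 1) = 2⁻¹ ^ (j + 1)`, and the nonnegative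
`m`-th term gives back its weight `2⁻¹ ^ (m + 1)`. -/
theorem two_inv_pow_le_tsum {c : ℕ → ℝ} (hc : Summable c) {j m : ℕ} (hjm : j < m)
    (hzero : ∀ i < j, c i = 0) (hcj : (2⁻¹ : ℝ) ^ (j + 1) ≤ c j)
    (hlow : ∀ i, j < i → -(2⁻¹ : ℝ) ^ (i + 1) ≤ c i) (hcm : 0 ≤ c m) :
    (2⁻¹ : ℝ) ^ (m + 1) ≤ ∑' i, c i := by
  obtain ⟨p, rfl⟩ := Nat.exists_eq_add_of_lt hjm
  have hgeom : HasSum (fun i ↦ (2⁻¹ : ℝ) ^ (i + (j + 1) + 1)) (2⁻¹ ^ (j + 1)) := by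
    refine (hasSum_geometric_two' ((2⁻¹ : ℝ) ^ (j + 1))).congr_fun fun i ↦ ?_
    simp only [pow_add, pow_one, inv_pow]; field_simp
  have htail : Summable fun i ↦ c (i + (j + 1)) := (summable_nat_add_iff (j + 1)).2 hc
  set h : ℕ → ℝ := fun i ↦ c (i + (j + 1)) + 2⁻¹ ^ (i + (j + 1) + 1)
  have hh_nonneg : ∀ i, 0 ≤ h i := fun i ↦ by
    simp only [h]; linarith [hlow (i + (j + 1)) (by omega)]
  have hhp : (2⁻¹ : ℝ) ^ (j + p + 1 + 1) ≤ h p := by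
    simp only [h, show p + (j + 1) = j + p + 1 by omega]; linarith
  have hsum_h : ∑' i, h i = ∑' i, c (i + (j + 1)) + 2⁻¹ ^ (j + 1) := by
    rw [htail.tsum_add hgeom.summable, hgeom.tsum_eq]
  have hhead : ∑ i ∈ range (j + 1), c i = c j := by
    rw [sum_range_succ, sum_eq_zero fun i hi ↦ hzero i (mem_range.1 hi), zero_add]
  calc (2⁻¹ : ℝ) ^ (j + p + 1 + 1) ≤ h p := hhp
    _ ≤ ∑' i, h i := (htail.add hgeom.summable).le_tsum p fun i _ ↦ hh_nonneg i
    _ ≤ ∑' i, c i := by rw [← hc.sum_add_tsum_nat_add (j + 1), hhead]; linarith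

theorem summable_digit_mul_two_inv_pow {d : ℕ → ℕ} (hd : ∀ i, d i ≤ 1) :
    Summable fun i : ℕ ↦ (d (i + 1) : ℝ) * 2⁻¹ ^ (i + 1) := by
  refine .of_nonneg_of_le (fun i ↦ by positivity) (fun i ↦ ?_)
    ((summable_nat_add_iff 1).2 (summable_geometric_of_lt_one (r := (2⁻¹ : ℝ)) (by norm_num)
      (by norm_num)))
  exact mul_le_of_le_one_left (by positivity) (by exact_mod_cast hd (i + 1))

theorem binaryValue_eq_tsum (d : ℕ → ℕ) :
    binaryValue d = ∑' i : ℕ, (d (i + 1) : ℝ) * 2⁻¹ ^ (i + 1) := by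
  unfold binaryValue
  congr! 2 with i
  rw [← Nat.cast_succ, zpow_neg, zpow_natCast, inv_pow]

theorem two_inv_pow_le_binaryValue_sub {d e : ℕ → ℕ} (hd : ∀ i, d i ≤ 1) (he : ∀ i, e i ≤ 1)
    {j m : ℕ} (hj : 1 ≤ j) (hjm : j < m) (hagree : ∀ i, 1 ≤ i → i < j → d i = e i)
    (hdj : e j < d j) (hm : e m ≤ d m) :
    (2⁻¹ : ℝ) ^ m ≤ binaryValue d - binaryValue e := by
  obtain ⟨j, rfl⟩ := Nat.exists_eq_add_of_le' hj
  obtain ⟨m, rfl⟩ := Nat.exists_eq_add_of_le' (hj.trans hjm.le)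
  rw [binaryValue_eq_tsum, binaryValue_eq_tsum,
    ← (summable_digit_mul_two_inv_pow hd).tsum_sub (summable_digit_mul_two_inv_pow he)]
  simp_rw [← sub_mul]
  refine two_inv_pow_le_tsum (j := j) (m := m) ((summable_digit_mul_two_inv_pow hd).sub
    (summable_digit_mul_two_inv_pow he) |>.congr fun i ↦ by ring) (by omega)
    (fun i hi ↦ by rw [hagree (i + 1) (by omega) (by omega), sub_self, zero_mul]) ?_ ?_ ?_
  · have : (1 : ℝ) ≤ d (j + 1) - e (j + 1) := by
      rw [le_sub_iff_add_le']; exact_mod_cast hdj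
    nlinarith [pow_pos (by norm_num : (0 : ℝ) < 2⁻¹) (j + 1)]
  · intro i _
    have hei : (e (i + 1) : ℝ) ≤ 1 := by exact_mod_cast he (i + 1)
    have : (-1 : ℝ) ≤ d (i + 1) - e (i + 1) := by linarith [(d (i + 1)).cast_nonneg (α := ℝ)]
    nlinarith [pow_pos (by norm_num : (0 : ℝ) < 2⁻¹) (i + 1)]
  · exact mul_nonneg (sub_nonneg.2 (by exact_mod_cast hm)) (by positivity)

theorem binary_expansion_match_corollary_general
    (α : ℝ)
    (b : ℕ → ℕ) (hb : ∀ k, b k ≤ 1)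
    (hbsum : α = ∑' k : ℕ, (b (k + 1) : ℝ) * (2 : ℝ) ^ (-((k : ℤ) + 1)))
    (x : ℚ) (hxl : α < (x : ℝ))
    (bt : ℕ → ℕ) (hbt : ∀ k, bt k ≤ 1)
    (hbtsum : (x : ℝ) = ∑' k : ℕ, (bt (k + 1) : ℝ) * (2 : ℝ) ^ (-((k : ℤ) + 1)))
    (hbt1 : ¬ ∃ K, ∀ k ≥ K, bt k = 1)
    (n : ℕ)
    (hclose : (x : ℝ) - α < (2 : ℝ) ^ (-(n : ℤ)))
    (k : ℕ) (hkn : k ≤ n) (hk1 : bt k = 1) :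
    ∀ j, 1 ≤ j → j < k → b j = bt j := by
  change α = binaryValue b at hbsum
  change (x : ℝ) = binaryValue bt at hbtsum
  intro j
  induction j using Nat.strong_induction_on with
  | _ j ih =>
  intro hj hjk
  have hagree : ∀ i, 1 ≤ i → i < j → b i = bt i := fun i hi hij ↦ ih i hij hi (hij.trans hjk)
  rcases lt_trichotomy (b j) (bt j) with hlt | heq | hgt
  · have hgap := two_inv_pow_le_binaryValue_sub hbt hb hj hjk
      (fun i hi hij ↦ (hagree i hi hij).symm) hlt (hk1 ▸ hb k)
    have hweight : (2⁻¹ : ℝ) ^ n ≤ 2⁻¹ ^ k := pow_le_pow_of_le_one (by norm_num) (by norm_num) hkn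
    rw [zpow_neg, zpow_natCast, ← inv_pow] at hclose
    linarith
  · exact heq
  · obtain ⟨m, hjm, hm⟩ : ∃ m ≥ j + 1, bt m ≠ 1 := by push Not at hbt1; exact hbt1 (j + 1)
    have hgap := two_inv_pow_le_binaryValue_sub hb hbt hj hjm hagree hgt
      (by have := hbt m; omega)
    have : (0 : ℝ) < 2⁻¹ ^ m := by positivity
    linarith

theorem binary_expansion_match_corollary
    (α : ℝ) (hα : α ∈ Set.Ioo (0 : ℝ) 1) (hirr : Irrational α)
    (b : ℕ → ℕ) (hb : ∀ k, b k ≤ 1)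
    (hbsum : α = ∑' k : ℕ, (b (k + 1) : ℝ) * (2 : ℝ) ^ (-((k : ℤ) + 1)))
    (x : ℚ) (hxl : α < (x : ℝ)) (hxu : (x : ℝ) < 1)
    (bt : ℕ → ℕ) (hbt : ∀ k, bt k ≤ 1)
    (hbtsum : (x : ℝ) = ∑' k : ℕ, (bt (k + 1) : ℝ) * (2 : ℝ) ^ (-((k : ℤ) + 1)))
    (hbt1 : ¬ ∃ K, ∀ k ≥ K, bt k = 1)
    (n : ℕ) (hn : 2 ≤ n)
    (hclose : (x : ℝ) - α < (2 : ℝ) ^ (-(n : ℤ)))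
    (k : ℕ) (hk2 : 2 ≤ k) (hkn : k ≤ n) (hk1 : bt k = 1) :
    ∀ j, 1 ≤ j → j < k → b j = bt j :=
  binary_expansion_match_corollary_general α b hb hbsum x hxl bt hbt hbtsum hbt1 n hclose k hkn hk1
end

section
/- With p_0 = q_0 = 1, p_{i+1} = p_i² − c q_i², q_{i+1} = 2 p_i q_i + b q_i², for integers b ≥ 2, c < 0, 1 + b + c > 0, one has b^(2^i − 1) ≤ q_i ≤ (b + 2)^(2^i − 1) for every i ≥ 0. -/
/-!
Writing `q_{i+1} = q_i (2 p_i + b q_i)`, the bounds follow by induction once `0 ≤ p_i ≤ q_i`: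
then `b q_i ≤ 2 p_i + b q_i ≤ (b + 2) q_i`, so each step squares the bound and multiplies it by
`b` resp. `b + 2`. The invariant `0 ≤ p_i ≤ q_i` is itself preserved, because `c ≤ 0` makes
`p_{i+1}` a sum of squares and `b + c ≥ 0` gives `p_i² - c q_i² ≤ p_i² + b q_i² ≤ 2 p_i q_i + b q_i²`.
-/

theorem pow_two_pow_succ_sub_one {M : Type*} [Monoid M] (x : M) (n : ℕ) :
    x ^ (2 ^ (n + 1) - 1) = (x ^ (2 ^ n - 1)) ^ 2 * x := by
  have hexp : 2 ^ (n + 1) - 1 = (2 ^ n - 1) * 2 + 1 := by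
    have : 1 ≤ 2 ^ n := Nat.one_le_two_pow
    rw [pow_succ]
    omega
  rw [hexp, pow_succ, pow_mul]

section NewtonStep

variable {R : Type*} [CommRing R] [LinearOrder R] [IsStrictOrderedRing R] {b c p q : R}

theorem sq_sub_mul_sq_nonneg (hc : c ≤ 0) : 0 ≤ p ^ 2 - c * q ^ 2 := by
  nlinarith [sq_nonneg p, sq_nonneg q]

theorem sq_sub_mul_sq_le (hbc : 0 ≤ b + c) (hp : 0 ≤ p) (hpq : p ≤ q) :
    p ^ 2 - c * q ^ 2 ≤ 2 * p * q + b * q ^ 2 := by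
  have : p * (p - 2 * q) ≤ 0 := mul_nonpos_of_nonneg_of_nonpos hp (by linarith)
  nlinarith [mul_nonneg hbc (sq_nonneg q)]

theorem mul_sq_le_two_mul_mul_add_mul_sq {l : R} (hb : 0 ≤ b) (hp : 0 ≤ p) (hl : 0 ≤ l)
    (hlq : l ≤ q) : b * l ^ 2 ≤ 2 * p * q + b * q ^ 2 := by
  have : l ^ 2 ≤ q ^ 2 := pow_le_pow_left₀ hl hlq 2
  nlinarith [mul_le_mul_of_nonneg_left this hb, mul_nonneg hp (hl.trans hlq)]

theorem two_mul_mul_add_mul_sq_le {u : R} (hb : 0 ≤ b) (hp : 0 ≤ p) (hpq : p ≤ q)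
    (hqu : q ≤ u) : 2 * p * q + b * q ^ 2 ≤ (b + 2) * u ^ 2 := by
  have hq : 0 ≤ q := hp.trans hpq
  calc 2 * p * q + b * q ^ 2 = q * (2 * p + b * q) := by ring
    _ ≤ q * ((b + 2) * q) := mul_le_mul_of_nonneg_left (by linarith) hq
    _ = (b + 2) * q ^ 2 := by ring
    _ ≤ (b + 2) * u ^ 2 := mul_le_mul_of_nonneg_left (pow_le_pow_left₀ hq hqu 2) (by linarith)

end NewtonStep

section NewtonSequence

variable {R : Type*} [CommRing R] [LinearOrder R] [IsStrictOrderedRing R] {b c : R}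
  {p q : ℕ → R}

theorem newton_nonneg_le (hc : c ≤ 0) (hbc : 0 ≤ b + c) (hp0 : p 0 = 1) (hq0 : q 0 = 1)
    (hp : ∀ i, p (i + 1) = p i ^ 2 - c * q i ^ 2)
    (hq : ∀ i, q (i + 1) = 2 * p i * q i + b * q i ^ 2) (i : ℕ) :
    0 ≤ p i ∧ p i ≤ q i := by
  induction i with
  | zero => simp [hp0, hq0]
  | succ n ih =>
    rw [hp n, hq n]
    exact ⟨sq_sub_mul_sq_nonneg hc, sq_sub_mul_sq_le hbc ih.1 ih.2⟩

theorem newton_denominator_bounds (hb : 0 ≤ b) (hc : c ≤ 0) (hbc : 0 ≤ b + c)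
    (hp0 : p 0 = 1) (hq0 : q 0 = 1) (hp : ∀ i, p (i + 1) = p i ^ 2 - c * q i ^ 2)
    (hq : ∀ i, q (i + 1) = 2 * p i * q i + b * q i ^ 2) (i : ℕ) :
    b ^ (2 ^ i - 1) ≤ q i ∧ q i ≤ (b + 2) ^ (2 ^ i - 1) := by
  induction i with
  | zero => simp [hq0]
  | succ n ih =>
    obtain ⟨hpn, hpq⟩ := newton_nonneg_le hc hbc hp0 hq0 hp hq n
    rw [hq n, pow_two_pow_succ_sub_one, pow_two_pow_succ_sub_one, mul_comm _ b,
      mul_comm _ (b + 2)]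
    exact ⟨mul_sq_le_two_mul_mul_add_mul_sq hb hpn (by positivity) ih.1,
      two_mul_mul_add_mul_sq_le hb hpn hpq ih.2⟩

end NewtonSequence

theorem q_bounds (b c : ℤ) (hb : 2 ≤ b) (hc : c < 0) (h : 0 < 1 + b + c)
    (p q : ℕ → ℤ) (hp0 : p 0 = 1) (hq0 : q 0 = 1)
    (hp : ∀ i, p (i + 1) = (p i) ^ 2 - c * (q i) ^ 2)
    (hq : ∀ i, q (i + 1) = 2 * p i * q i + b * (q i) ^ 2) :
    ∀ i : ℕ, b ^ (2 ^ i - 1) ≤ q i ∧ q i ≤ (b + 2) ^ (2 ^ i - 1) :=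
  newton_denominator_bounds (by omega) hc.le (by omega) hp0 hq0 hp hq
end

section
/- With p_0 = q_0 = 1, p_{i+1} = p_i² − c q_i², q_{i+1} = 2 p_i q_i + b q_i², for integers b ≥ 2, c < 0, 1 + b + c > 0, the bit length ℓ_i = ⌊log₂ q_i⌋ + 1 satisfies (2^i − 1) log₂ b < ℓ_i ≤ (2^i − 1) log₂(b + 2) + 1 < 2^i log₂(b + 2) for all i ≥ 0. -/
/-!
Both numerator and denominator stay positive with `p i ≤ q i` (this is where `c < 0` and
`-c ≤ b` enter). Hence `b q_i² ≤ q_{i+1} ≤ (b + 2) q_i²`, i.e. `b q_i` and `(b + 2) q_i` are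
super- resp. sub-quadratic sequences starting at `b` and `b + 2`, which gives
`b ^ (2 ^ i) ≤ b q_i` and `(b + 2) q_i ≤ (b + 2) ^ (2 ^ i)`. Taking `logb 2` bounds
`logb 2 q_i` between `(2 ^ i - 1) logb 2 b` and `(2 ^ i - 1) logb 2 (b + 2)`, and the bit length
`⌊logb 2 q_i⌋ + 1` lies within one of `logb 2 q_i`; the last inequality is `1 < logb 2 (b + 2)`.
-/

open Real

section SquaringSequences

variable {R : Type*} [Semiring R] [PartialOrder R] [IsOrderedRing R] {u : ℕ → R} {a : R}

theorem pow_two_pow_le_of_sq_le (ha : 0 ≤ a) (h0 : a ≤ u 0)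
    (hstep : ∀ i, u i ^ 2 ≤ u (i + 1)) (i : ℕ) : a ^ 2 ^ i ≤ u i := by
  induction i with
  | zero => simpa using h0
  | succ i ih =>
    calc a ^ 2 ^ (i + 1) = (a ^ 2 ^ i) ^ 2 := by rw [pow_succ, pow_mul]
      _ ≤ u i ^ 2 := pow_le_pow_left₀ (pow_nonneg ha _) ih 2
      _ ≤ u (i + 1) := hstep i

theorem le_pow_two_pow_of_le_sq (hu : ∀ i, 0 ≤ u i) (h0 : u 0 ≤ a)
    (hstep : ∀ i, u (i + 1) ≤ u i ^ 2) (i : ℕ) : u i ≤ a ^ 2 ^ i := by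
  induction i with
  | zero => simpa using h0
  | succ i ih =>
    calc u (i + 1) ≤ u i ^ 2 := hstep i
      _ ≤ (a ^ 2 ^ i) ^ 2 := pow_le_pow_left₀ (hu i) ih 2
      _ = a ^ 2 ^ (i + 1) := by rw [pow_succ 2 i, pow_mul]

end SquaringSequences

section NewtonIterates

variable {b c : ℤ} {p q : ℕ → ℤ} (hp0 : p 0 = 1) (hq0 : q 0 = 1)
    (hp : ∀ i, p (i + 1) = p i ^ 2 - c * q i ^ 2)
    (hq : ∀ i, q (i + 1) = 2 * p i * q i + b * q i ^ 2)
include hp0 hq0 hp hq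

theorem newton_pos_and_le (hc : c ≤ 0) (hcb : -c ≤ b) (i : ℕ) :
    0 < p i ∧ 0 < q i ∧ p i ≤ q i := by
  induction i with
  | zero => simp [hp0, hq0]
  | succ i ih =>
    obtain ⟨hpi, hqi, hpq⟩ := ih
    rw [hp, hq]
    refine ⟨?_, ?_, ?_⟩
    · nlinarith [mul_nonneg (neg_nonneg.mpr hc) (sq_nonneg (q i))]
    · nlinarith [mul_pos hpi hqi, mul_nonneg (neg_nonneg.mpr hc) (sq_nonneg (q i))]
    · nlinarith [mul_le_mul_of_nonneg_left hpq hpi.le,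
        mul_le_mul_of_nonneg_right hcb (sq_nonneg (q i)), mul_pos hpi hqi]

theorem pow_two_pow_le_mul_newton_denom (hc : c ≤ 0) (hcb : -c ≤ b) (i : ℕ) :
    b ^ 2 ^ i ≤ b * q i := by
  have hb : 0 ≤ b := by omega
  refine pow_two_pow_le_of_sq_le (u := fun j => b * q j) hb (by simp [hq0]) (fun j => ?_) i
  obtain ⟨hpj, hqj, -⟩ := newton_pos_and_le hp0 hq0 hp hq hc hcb j
  rw [hq]
  nlinarith [mul_le_mul_of_nonneg_left (mul_pos hpj hqj).le hb]

theorem mul_newton_denom_le_pow_two_pow (hc : c ≤ 0) (hcb : -c ≤ b) (i : ℕ) :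
    (b + 2) * q i ≤ (b + 2) ^ 2 ^ i := by
  have hb2 : 0 ≤ b + 2 := by omega
  refine le_pow_two_pow_of_le_sq (u := fun j => (b + 2) * q j)
    (fun j => mul_nonneg hb2 (newton_pos_and_le hp0 hq0 hp hq hc hcb j).2.1.le)
    (by simp [hq0]) (fun j => ?_) i
  obtain ⟨hpj, hqj, hpq⟩ := newton_pos_and_le hp0 hq0 hp hq hc hcb j
  rw [hq]
  nlinarith [mul_le_mul_of_nonneg_left (mul_le_mul_of_nonneg_right hpq hqj.le) hb2]

end NewtonIterates

section Logarithms

variable {β a x : ℝ} {n : ℕ}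

theorem sub_one_mul_logb_le_of_pow_le_mul (hβ : 1 < β) (ha : 0 < a) (hx : 0 < x)
    (h : a ^ n ≤ a * x) : (n - 1) * logb β a ≤ logb β x := by
  have := logb_le_logb_of_le hβ (pow_pos ha n) h
  rw [logb_pow, logb_mul ha.ne' hx.ne'] at this
  linarith

theorem logb_le_sub_one_mul_of_mul_le_pow (hβ : 1 < β) (ha : 0 < a) (hx : 0 < x)
    (h : a * x ≤ a ^ n) : logb β x ≤ (n - 1) * logb β a := by
  have := logb_le_logb_of_le hβ (mul_pos ha hx) h
  rw [logb_pow, logb_mul ha.ne' hx.ne'] at this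
  linarith

end Logarithms

theorem bitlength_bounds (b c : ℤ) (hb : 2 ≤ b) (hc : c < 0) (h : 0 < 1 + b + c)
    (p q : ℕ → ℤ) (hp0 : p 0 = 1) (hq0 : q 0 = 1)
    (hp : ∀ i, p (i + 1) = (p i) ^ 2 - c * (q i) ^ 2)
    (hq : ∀ i, q (i + 1) = 2 * p i * q i + b * (q i) ^ 2) :
    ∀ i : ℕ,
      ((2 : ℝ) ^ i - 1) * Real.logb 2 (b : ℝ)
          < ((⌊Real.logb 2 ((q i : ℝ))⌋ + 1 : ℤ) : ℝ) ∧
      ((⌊Real.logb 2 ((q i : ℝ))⌋ + 1 : ℤ) : ℝ)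
          ≤ ((2 : ℝ) ^ i - 1) * Real.logb 2 ((b : ℝ) + 2) + 1 ∧
      ((2 : ℝ) ^ i - 1) * Real.logb 2 ((b : ℝ) + 2) + 1
          < (2 : ℝ) ^ i * Real.logb 2 ((b : ℝ) + 2) := by
  intro i
  have hc' : c ≤ 0 := hc.le
  have hcb : -c ≤ b := by omega
  have hqi : (0 : ℝ) < q i := by exact_mod_cast (newton_pos_and_le hp0 hq0 hp hq hc' hcb i).2.1
  have hbR : (2 : ℝ) ≤ b := by exact_mod_cast hb
  have hlo : ((2 : ℝ) ^ i - 1) * logb 2 b ≤ logb 2 (q i) := by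
    have := pow_two_pow_le_mul_newton_denom hp0 hq0 hp hq hc' hcb i
    exact_mod_cast sub_one_mul_logb_le_of_pow_le_mul (a := b) one_lt_two (by linarith) hqi
      (n := 2 ^ i) (by exact_mod_cast this)
  have hhi : logb 2 (q i) ≤ ((2 : ℝ) ^ i - 1) * logb 2 (b + 2) := by
    have := mul_newton_denom_le_pow_two_pow hp0 hq0 hp hq hc' hcb i
    exact_mod_cast logb_le_sub_one_mul_of_mul_le_pow (a := b + 2) one_lt_two (by linarith) hqi
      (n := 2 ^ i) (by exact_mod_cast this)
  have hL : 1 < logb 2 ((b : ℝ) + 2) := by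
    rw [lt_logb_iff_rpow_lt one_lt_two (by linarith)]
    norm_num
    linarith
  have hfloor_gt := Int.lt_floor_add_one (logb 2 (q i : ℝ))
  have hfloor_le := Int.floor_le (logb 2 (q i : ℝ))
  push_cast
  refine ⟨by linarith, by linarith, by linarith⟩
end

section
/- Define sequences (b_n, c_n) of integer pairs by the Bernoulli-map dynamics: if sgn(1 + 2b_n + 4c_n) ≠ sgn(c_n) then (b_{n+1}, c_{n+1}) = (2b_n, 4c_n), otherwise (b_{n+1}, c_{n+1}) = (2b_n + 2, 2b_n + 4c_n + 1). If b_0 > 0, then 2^n b_0 ≤ b_n ≤ 2^n (b_0 + 2) − 2 for all n ≥ 0. -/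
/-! Each step of the recursion sends `b` to `2b` or `2b + 2`, so `b` at least doubles while
`b + 2` at most doubles; iterating gives the two bounds. -/

section GeometricBounds

variable {R : Type*} [Semiring R] [PartialOrder R] [IsOrderedRing R] {f : ℕ → R} {a : R}

theorem pow_mul_le_of_mul_le_succ (ha : 0 ≤ a) (h : ∀ n, a * f n ≤ f (n + 1)) (n : ℕ) :
    a ^ n * f 0 ≤ f n := by
  induction n with
  | zero => simp
  | succ n ih =>
    calc a ^ (n + 1) * f 0 = a * (a ^ n * f 0) := by rw [pow_succ', mul_assoc]
      _ ≤ a * f n := mul_le_mul_of_nonneg_left ih ha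
      _ ≤ f (n + 1) := h n

theorem le_pow_mul_of_succ_le_mul (ha : 0 ≤ a) (h : ∀ n, f (n + 1) ≤ a * f n) (n : ℕ) :
    f n ≤ a ^ n * f 0 := by
  induction n with
  | zero => simp
  | succ n ih =>
    calc f (n + 1) ≤ a * f n := h n
      _ ≤ a * (a ^ n * f 0) := mul_le_mul_of_nonneg_left ih ha
      _ = a ^ (n + 1) * f 0 := by rw [pow_succ', mul_assoc]

end GeometricBounds

theorem bernoulli_step_bounds (b c b' c' : ℤ)
    (hrec : (Int.sign (1 + 2 * b + 4 * c) ≠ Int.sign c → b' = 2 * b ∧ c' = 4 * c) ∧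
      (Int.sign (1 + 2 * b + 4 * c) = Int.sign c → b' = 2 * b + 2 ∧ c' = 2 * b + 4 * c + 1)) :
    2 * b ≤ b' ∧ b' + 2 ≤ 2 * (b + 2) := by
  by_cases h : Int.sign (1 + 2 * b + 4 * c) = Int.sign c
  · have := (hrec.2 h).1; constructor <;> linarith
  · have := (hrec.1 h).1; constructor <;> linarith

theorem bernoulli_coeff_growth_general (b c : ℕ → ℤ)
    (hrec : ∀ n,
      (Int.sign (1 + 2 * b n + 4 * c n) ≠ Int.sign (c n) →
        b (n + 1) = 2 * b n ∧ c (n + 1) = 4 * c n) ∧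
      (Int.sign (1 + 2 * b n + 4 * c n) = Int.sign (c n) →
        b (n + 1) = 2 * b n + 2 ∧ c (n + 1) = 2 * b n + 4 * c n + 1)) :
    ∀ n : ℕ, 2 ^ n * b 0 ≤ b n ∧ b n ≤ 2 ^ n * (b 0 + 2) - 2 := by
  have step n := bernoulli_step_bounds (b n) (c n) (b (n + 1)) (c (n + 1)) (hrec n)
  intro n
  constructor
  · exact pow_mul_le_of_mul_le_succ zero_le_two (fun n => (step n).1) n
  · have := le_pow_mul_of_succ_le_mul (f := fun n => b n + 2) zero_le_two
      (fun n => (step n).2) n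
    linarith

theorem bernoulli_coeff_growth (b c : ℕ → ℤ)
    (hrec : ∀ n,
      (Int.sign (1 + 2 * b n + 4 * c n) ≠ Int.sign (c n) →
        b (n + 1) = 2 * b n ∧ c (n + 1) = 4 * c n) ∧
      (Int.sign (1 + 2 * b n + 4 * c n) = Int.sign (c n) →
        b (n + 1) = 2 * b n + 2 ∧ c (n + 1) = 2 * b n + 4 * c n + 1))
    (hb0 : 0 < b 0) :
    ∀ n : ℕ, 2 ^ n * b 0 ≤ b n ∧ b n ≤ 2 ^ n * (b 0 + 2) - 2 :=
  bernoulli_coeff_growth_general b c hrec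
end

section
/- Let (b, c) ∈ ℤ² with c < 0 and 1 + b + c > 0, and let α ∈ (0,1) be the root of x² + bx + c. Then 2α mod 1 is again a root in (0,1) of a monic quadratic with integer coefficients; specifically, if sgn(1 + 2b + 4c) ≠ sgn(c) then 2α ∈ (0,1) and 2α is the root in (0,1) of x² + 2bx + 4c, while otherwise 2α − 1 ∈ (0,1) and is the root in (0,1) of x² + (2b + 2)x + (2b + 4c + 1). -/
/-! Evaluating at `1/2` gives `1 + 2b + 4c = (1 - 2α)(1 + 2α + 2b)`, and the second factor is
positive because `α (α + b) = -c > 0`. So the sign of the odd integer `1 + 2b + 4c` tells on which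
side of `1/2` the root lies, i.e. whether the Bernoulli map acts on it by `x ↦ 2x` or `x ↦ 2x - 1`;
substituting `α = y/2` resp. `α = (y + 1)/2` in `α² + bα + c = 0` gives the new quadratics. -/

section CommRing

variable {R : Type*} [CommRing R] {b c α : R}

theorem quadratic_root_two_mul (h : α ^ 2 + b * α + c = 0) :
    (2 * α) ^ 2 + 2 * b * (2 * α) + 4 * c = 0 := by
  linear_combination 4 * h

theorem quadratic_root_two_mul_sub_one (h : α ^ 2 + b * α + c = 0) :
    (2 * α - 1) ^ 2 + (2 * b + 2) * (2 * α - 1) + (2 * b + 4 * c + 1) = 0 := by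
  linear_combination 4 * h

theorem one_add_two_mul_add_four_mul_eq_of_quadratic_root (h : α ^ 2 + b * α + c = 0) :
    1 + 2 * b + 4 * c = (1 - 2 * α) * (1 + 2 * α + 2 * b) := by
  linear_combination 4 * h

end CommRing

section OrderedField

variable {K : Type*} [Field K] [LinearOrder K] [IsStrictOrderedRing K] {b c α : K}

theorem add_pos_of_quadratic_root (hα : 0 < α) (hc : c < 0) (h : α ^ 2 + b * α + c = 0) :
    0 < α + b :=
  pos_of_mul_pos_right (by linear_combination (-1 : K) * h + hc) hα.le

theorem lt_half_iff_of_quadratic_root (hα : 0 < α) (hc : c < 0) (h : α ^ 2 + b * α + c = 0) :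
    α < 1 / 2 ↔ 0 < 1 + 2 * b + 4 * c := by
  have hpos : 0 < 1 + 2 * α + 2 * b := by linarith [add_pos_of_quadratic_root hα hc h]
  rw [one_add_two_mul_add_four_mul_eq_of_quadratic_root h, mul_pos_iff_of_pos_right hpos]
  constructor <;> intro <;> linarith

theorem half_lt_iff_of_quadratic_root (hα : 0 < α) (hc : c < 0) (h : α ^ 2 + b * α + c = 0) :
    1 / 2 < α ↔ 1 + 2 * b + 4 * c < 0 := by
  have hpos : 0 < 1 + 2 * α + 2 * b := by linarith [add_pos_of_quadratic_root hα hc h]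
  rw [one_add_two_mul_add_four_mul_eq_of_quadratic_root h, ← neg_pos, ← neg_mul,
    mul_pos_iff_of_pos_right hpos]
  constructor <;> intro <;> linarith

end OrderedField

theorem bernoulli_map_on_roots_general (b c : ℤ) (hc : c < 0)
    (α : ℝ) (hα : α ∈ Set.Ioo (0 : ℝ) 1)
    (hroot : α ^ 2 + (b : ℝ) * α + (c : ℝ) = 0) :
    (Int.sign (1 + 2 * b + 4 * c) ≠ Int.sign c →
      2 * α ∈ Set.Ioo (0 : ℝ) 1 ∧
      (2 * α) ^ 2 + ((2 * b : ℤ) : ℝ) * (2 * α) + ((4 * c : ℤ) : ℝ) = 0) ∧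
    (Int.sign (1 + 2 * b + 4 * c) = Int.sign c →
      2 * α - 1 ∈ Set.Ioo (0 : ℝ) 1 ∧
      (2 * α - 1) ^ 2 + ((2 * b + 2 : ℤ) : ℝ) * (2 * α - 1)
        + ((2 * b + 4 * c + 1 : ℤ) : ℝ) = 0) := by
  obtain ⟨hα0, hα1⟩ := hα
  have hcR : (c : ℝ) < 0 := by exact_mod_cast hc
  have hsign : Int.sign (1 + 2 * b + 4 * c) = Int.sign c ↔ 1 + 2 * b + 4 * c < 0 := by
    rw [Int.sign_eq_neg_one_of_neg hc, Int.sign_eq_neg_one_iff_neg]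
  refine ⟨fun hs => ⟨?_, ?_⟩, fun hs => ⟨?_, ?_⟩⟩
  · -- `1 + 2b + 4c` is odd, so it is nonzero
    have hD : 0 < 1 + 2 * b + 4 * c := by rw [Ne, hsign] at hs; omega
    have := (lt_half_iff_of_quadratic_root hα0 hcR hroot).2 (by exact_mod_cast hD)
    constructor <;> linarith
  · push_cast
    exact quadratic_root_two_mul hroot
  · have := (half_lt_iff_of_quadratic_root hα0 hcR hroot).2 (by exact_mod_cast hsign.1 hs)
    constructor <;> linarith
  · push_cast
    exact quadratic_root_two_mul_sub_one hroot

theorem bernoulli_map_on_roots (b c : ℤ) (hc : c < 0) (h : 0 < 1 + b + c)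
    (α : ℝ) (hα : α ∈ Set.Ioo (0 : ℝ) 1)
    (hroot : α ^ 2 + (b : ℝ) * α + (c : ℝ) = 0) :
    (Int.sign (1 + 2 * b + 4 * c) ≠ Int.sign c →
      2 * α ∈ Set.Ioo (0 : ℝ) 1 ∧
      (2 * α) ^ 2 + ((2 * b : ℤ) : ℝ) * (2 * α) + ((4 * c : ℤ) : ℝ) = 0) ∧
    (Int.sign (1 + 2 * b + 4 * c) = Int.sign c →
      2 * α - 1 ∈ Set.Ioo (0 : ℝ) 1 ∧
      (2 * α - 1) ^ 2 + ((2 * b + 2 : ℤ) : ℝ) * (2 * α - 1)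
        + ((2 * b + 4 * c + 1 : ℤ) : ℝ) = 0) :=
  bernoulli_map_on_roots_general b c hc α hα hroot
end

section
/- Let (b, c) ∈ ℤ² with c < 0 and 1 + b + c > 0, α ∈ (0,1) the root of x² + bx + c, and α = Σ_{k≥1} d_k 2^(−k) its binary expansion. Then the first binary digit d_1 equals 0 if sgn(1 + 2b + 4c) ≠ sgn(c), and equals 1 otherwise. -/
/-!
Write `f x = x² + b x + c`. Since `c < 0` and `α > 0`, we have `α + b = -c / α > 0`, so in
`4 f(1/2) = 1 + 2b + 4c = (1 - 2α)(1 + 2α + 2b)` the second factor is positive and the sign of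
`1 + 2b + 4c` decides whether `α < 1/2` or `α > 1/2`. It is never `0`, being odd, and
`sgn c = -1`. Finally the first binary digit of a number is `0` below `1/2` and `1` above it.
-/

namespace Real

theorem ofDigits_mem_Icc {b : ℕ} (a : ℕ → Fin b) :
    ofDigits a ∈ Set.Icc ((a 0 : ℝ) / b) (((a 0 : ℝ) + 1) / b) := by
  have hsplit := ofDigits_eq_sum_add_ofDigits a 1
  simp only [Finset.range_one, Finset.sum_singleton, ofDigitsTerm, zero_add, pow_one] at hsplit
  have h0 := ofDigits_nonneg fun i ↦ a (i + 1)
  have h1 := ofDigits_le_one fun i ↦ a (i + 1)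
  rw [hsplit, add_div, div_eq_mul_inv, one_div]
  constructor <;> nlinarith [inv_nonneg.2 (Nat.cast_nonneg b : (0 : ℝ) ≤ b)]

theorem ofDigits_eq_tsum_zpow_two (a : ℕ → Fin 2) :
    ofDigits a = ∑' k : ℕ, (a k : ℝ) * (2 : ℝ) ^ (-((k : ℤ) + 1)) := by
  refine tsum_congr fun k ↦ ?_
  rw [ofDigitsTerm, zpow_neg, ← Nat.cast_succ, zpow_natCast]
  norm_num

theorem digit_zero_eq_zero_of_ofDigits_lt_half {a : ℕ → Fin 2} (h : ofDigits a < 1 / 2) :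
    a 0 = 0 := by
  by_contra h0
  have hlow := (ofDigits_mem_Icc a).1
  rw [Fin.eq_one_of_ne_zero (a 0) h0] at hlow
  norm_num at hlow
  linarith

theorem digit_zero_eq_one_of_half_lt_ofDigits {a : ℕ → Fin 2} (h : 1 / 2 < ofDigits a) :
    a 0 = 1 := by
  by_contra h1
  have hup := (ofDigits_mem_Icc a).2
  rw [show a 0 = 0 by omega] at hup
  norm_num at hup
  linarith

end Real

section QuadraticRoot

variable {b c α : ℝ}

theorem four_mul_eval_half_eq_of_root (hroot : α ^ 2 + b * α + c = 0) :
    1 + 2 * b + 4 * c = (1 - 2 * α) * (1 + 2 * (α + b)) := by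
  linear_combination 4 * hroot

theorem root_add_pos (hc : c < 0) (hα : 0 < α) (hroot : α ^ 2 + b * α + c = 0) :
    0 < α + b := by
  nlinarith

theorem root_lt_half_iff (hc : c < 0) (hα : 0 < α) (hroot : α ^ 2 + b * α + c = 0) :
    α < 1 / 2 ↔ 0 < 1 + 2 * b + 4 * c := by
  have hpos : 0 < 1 + 2 * (α + b) := by linarith [root_add_pos hc hα hroot]
  rw [four_mul_eval_half_eq_of_root hroot, mul_pos_iff_of_pos_right hpos]
  constructor <;> intro <;> linarith

theorem half_lt_root_iff (hc : c < 0) (hα : 0 < α) (hroot : α ^ 2 + b * α + c = 0) :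
    1 / 2 < α ↔ 1 + 2 * b + 4 * c < 0 := by
  have hpos : 0 < 1 + 2 * (α + b) := by linarith [root_add_pos hc hα hroot]
  rw [← neg_pos, four_mul_eval_half_eq_of_root hroot, ← neg_mul, mul_pos_iff_of_pos_right hpos]
  constructor <;> intro <;> linarith

end QuadraticRoot

theorem first_binary_digit_general (b c : ℤ) (hc : c < 0)
    (α : ℝ) (hα : α ∈ Set.Ioo (0 : ℝ) 1)
    (hroot : α ^ 2 + (b : ℝ) * α + (c : ℝ) = 0)
    (d : ℕ → ℕ) (hd : ∀ k, d k ≤ 1)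
    (hsum : α = ∑' k : ℕ, (d (k + 1) : ℝ) * (2 : ℝ) ^ (-((k : ℤ) + 1))) :
    (Int.sign (1 + 2 * b + 4 * c) ≠ Int.sign c → d 1 = 0) ∧
    (Int.sign (1 + 2 * b + 4 * c) = Int.sign c → d 1 = 1) := by
  have hcR : (c : ℝ) < 0 := by exact_mod_cast hc
  let e : ℕ → Fin 2 := fun k ↦ ⟨d (k + 1), Nat.lt_succ_of_le (hd _)⟩
  have hαe : α = Real.ofDigits e := hsum.trans (Real.ofDigits_eq_tsum_zpow_two e).symm
  have hodd : 1 + 2 * b + 4 * c ≠ 0 := by omega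
  rw [Int.sign_eq_neg_one_of_neg hc, Ne, Int.sign_eq_neg_one_iff_neg]
  constructor
  · intro hnonneg
    have hpos : 0 < 1 + 2 * b + 4 * c := by omega
    have hlt : α < 1 / 2 := (root_lt_half_iff hcR hα.1 hroot).2 (by exact_mod_cast hpos)
    exact congrArg Fin.val (Real.digit_zero_eq_zero_of_ofDigits_lt_half (hαe ▸ hlt))
  · intro hneg
    have hgt : 1 / 2 < α := (half_lt_root_iff hcR hα.1 hroot).2 (by exact_mod_cast hneg)
    exact congrArg Fin.val (Real.digit_zero_eq_one_of_half_lt_ofDigits (hαe ▸ hgt))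

theorem first_binary_digit (b c : ℤ) (hc : c < 0) (h : 0 < 1 + b + c)
    (α : ℝ) (hα : α ∈ Set.Ioo (0 : ℝ) 1)
    (hroot : α ^ 2 + (b : ℝ) * α + (c : ℝ) = 0) (hirr : Irrational α)
    (d : ℕ → ℕ) (hd : ∀ k, d k ≤ 1)
    (hsum : α = ∑' k : ℕ, (d (k + 1) : ℝ) * (2 : ℝ) ^ (-((k : ℤ) + 1))) :
    (Int.sign (1 + 2 * b + 4 * c) ≠ Int.sign c → d 1 = 0) ∧
    (Int.sign (1 + 2 * b + 4 * c) = Int.sign c → d 1 = 1) :=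
  first_binary_digit_general b c hc α hα hroot d hd hsum
end
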